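/- Let Ω ⊂ ℝ² be a bounded domain with Poincaré–Friedrichs constant C_PF, let σ ∈ L^∞(Ω) with c̲ := ess inf σ > 0, and let κ ∈ L^∞(Ω) be such that ess inf(σ+κ) ≥ c̲. Let u^σ, u^{σ+κ} ∈ H¹₀(Ω) be the weak solutions of ∇·(σ∇u)=1 and ∇·((σ+κ)∇u)=1 with homogeneous Dirichlet boundary conditions, and let v_κ^σ ∈ H¹₀(Ω) be the unique solution of ∫_Ω σ ∇v_κ^σ·∇w dx = -∫_Ω κ ∇u^σ·∇w dx for all w ∈ H¹₀(Ω). Then, with C' := (‖1‖_{L²(Ω)}·C_PF)/c̲², it holds ‖∇(u^{σ+κ} − u^σ − v_κ^σ)‖_{L²(Ω)} ≤ (C'/c̲) ‖κ‖²_{L^∞(Ω)}. -/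

import Mathlib

open MeasureTheory Filter
open scoped RealInnerProductSpace

noncomputable section

/-- Abbreviation for the plane `ℝ²`. -/
abbrev E2 : Type := EuclideanSpace ℝ (Fin 2)

/-- Membership in `H¹₀(Ω)`: the pair `(u, gu)` — a function together with its (weak)
gradient — lies in `L²(Ω)` and is an `H¹(Ω)`-limit of a sequence of smooth functions
compactly supported in `Ω` (i.e. `u` lies in the closure of `C_c^∞(Ω)` in `H¹(Ω)`). -/
def MemH10 (Ω : Set E2) (u : E2 → ℝ) (gu : E2 → E2) : Prop :=
  MemLp u 2 (volume.restrict Ω) ∧ MemLp gu 2 (volume.restrict Ω) ∧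
  ∃ φ : ℕ → E2 → ℝ,
    (∀ n, ContDiff ℝ (⊤ : ℕ∞) (φ n) ∧ HasCompactSupport (φ n) ∧ tsupport (φ n) ⊆ Ω) ∧
    Tendsto (fun n => ∫ x in Ω, (φ n x - u x) ^ 2) atTop (nhds 0) ∧
    Tendsto (fun n => ∫ x in Ω, ‖gradient (φ n) x - gu x‖ ^ 2) atTop (nhds 0)

/-! The three gradients `∇u^{σ+κ}`, `d = ∇(u^{σ+κ} - u^σ)` and `e = d - ∇v` each satisfy an
energy identity, obtained by testing the weak formulations with the corresponding `H¹₀`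
function: `∫ (σ+κ) |∇u^{σ+κ}|² = -∫ u^{σ+κ}`, `∫ σ |d|² = -∫ κ ∇u^{σ+κ}·d` and
`∫ σ |e|² = -∫ κ d·e`. Coercivity (`σ, σ+κ ≥ c̲`) and Cauchy–Schwarz turn these into
`c̲ ‖∇u^{σ+κ}‖ ≤ |Ω|^{1/2} C_PF` (using Poincaré–Friedrichs for `u^{σ+κ}`),
`c̲ ‖d‖ ≤ ‖κ‖_∞ ‖∇u^{σ+κ}‖` and `c̲ ‖e‖ ≤ ‖κ‖_∞ ‖d‖`; chaining the three gives the bound. -/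

theorem mul_le_of_mul_sq_le_mul {c x y : ℝ} (hx : 0 ≤ x) (hy : 0 ≤ y) (h : c * x ^ 2 ≤ y * x) :
    c * x ≤ y := by
  rcases hx.eq_or_lt with rfl | hx
  · simpa using hy
  · exact le_of_mul_le_mul_right (by linarith) hx

theorem le_div_sq_div_mul_sq_of_mul_le {c k a d e S : ℝ} (hc : 0 < c) (hk : 0 ≤ k)
    (ha : c * a ≤ S) (hd : c * d ≤ k * a) (he : c * e ≤ k * d) : e ≤ S / c ^ 2 / c * k ^ 2 := by
  rw [div_div, ← pow_succ, div_mul_eq_mul_div, le_div_iff₀ (by positivity)]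
  calc e * c ^ 3 = c ^ 2 * (c * e) := by ring
    _ ≤ c ^ 2 * (k * d) := by gcongr
    _ = c * k * (c * d) := by ring
    _ ≤ c * k * (k * a) := by gcongr
    _ = k ^ 2 * (c * a) := by ring
    _ ≤ k ^ 2 * S := by gcongr
    _ = S * k ^ 2 := mul_comm _ _

namespace MeasureTheory

variable {α F : Type*} [MeasurableSpace α] {μ : Measure α}
  [NormedAddCommGroup F] [InnerProductSpace ℝ F]

theorem MemLp.ae_abs_le_eLpNorm_top {f : α → ℝ} (hf : MemLp f ⊤ μ) :
    ∀ᵐ x ∂μ, |f x| ≤ (eLpNorm f ⊤ μ).toReal := by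
  filter_upwards [ae_le_eLpNormEssSup (f := f) (μ := μ)] with x hx
  rw [← eLpNorm_exponent_top, ← ofReal_norm, Real.norm_eq_abs] at hx
  exact (ENNReal.ofReal_le_iff_le_toReal hf.eLpNorm_ne_top).1 hx

theorem MemLp.ae_essInf_le {f : α → ℝ} (hf : MemLp f ⊤ μ) : ∀ᵐ x ∂μ, essInf f μ ≤ f x :=
  _root_.ae_essInf_le ⟨_, hf.ae_abs_le_eLpNorm_top.mono fun _ hx => neg_le_of_abs_le hx⟩

theorem MemLp.ae_abs_le_essSup {f : α → ℝ} (hf : MemLp f ⊤ μ) :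
    ∀ᵐ x ∂μ, |f x| ≤ essSup (fun x => |f x|) μ :=
  _root_.ae_le_essSup ⟨_, hf.ae_abs_le_eLpNorm_top⟩

theorem MemLp.essSup_abs_nonneg {f : α → ℝ} (hf : MemLp f ⊤ μ) :
    0 ≤ essSup (fun x => |f x|) μ := by
  rcases eq_zero_or_neZero μ with rfl | hμ
  · -- for `μ = 0` the essential supremum is `sInf univ`, which is `0` in `ℝ`
    simp [essSup, Filter.limsup, Filter.limsSup]
  · obtain ⟨x, hx⟩ := hf.ae_abs_le_essSup.exists
    exact (abs_nonneg _).trans hx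

theorem integral_norm_mul_norm_le {E : Type*} [NormedAddCommGroup E] {a b : α → E}
    (ha : MemLp a 2 μ) (hb : MemLp b 2 μ) :
    ∫ x, ‖a x‖ * ‖b x‖ ∂μ ≤ √(∫ x, ‖a x‖ ^ 2 ∂μ) * √(∫ x, ‖b x‖ ^ 2 ∂μ) := by
  have h2 : ENNReal.ofReal 2 = 2 := by norm_num
  convert integral_mul_le_Lp_mul_Lq_of_nonneg Real.HolderConjugate.two_two
    (.of_forall fun x => norm_nonneg (a x)) (.of_forall fun x => norm_nonneg (b x))
    (h2 ▸ ha.norm) (h2 ▸ hb.norm) using 2 <;>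
  simp [Real.sqrt_eq_rpow]

theorem neg_integral_le_sqrt_measure_mul [IsFiniteMeasure μ] {w : α → ℝ} (hw : MemLp w 2 μ) :
    -∫ x, w x ∂μ ≤ √(μ.real Set.univ) * √(∫ x, w x ^ 2 ∂μ) := by
  have h := integral_norm_mul_norm_le (memLp_const (1 : ℝ)) hw
  simp only [norm_one, one_mul, one_pow, integral_const, smul_eq_mul, mul_one,
    Real.norm_eq_abs, sq_abs] at h
  exact (neg_le_abs _).trans (abs_integral_le_integral_abs.trans h)

theorem tendsto_integral_norm_sub_sq {ι E : Type*} [NormedAddCommGroup E] {l : Filter ι}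
    {A B : ι → α → E} (hA : ∀ n, MemLp (A n) 2 μ) (hB : ∀ n, MemLp (B n) 2 μ)
    (hA0 : Tendsto (fun n => ∫ x, ‖A n x‖ ^ 2 ∂μ) l (nhds 0))
    (hB0 : Tendsto (fun n => ∫ x, ‖B n x‖ ^ 2 ∂μ) l (nhds 0)) :
    Tendsto (fun n => ∫ x, ‖A n x - B n x‖ ^ 2 ∂μ) l (nhds 0) := by
  refine squeeze_zero (fun n => integral_nonneg fun x => sq_nonneg _) (fun n => ?_)
    (by simpa using (hA0.add hB0).const_mul 2)
  have hiA := (hA n).integrable_norm_pow two_ne_zero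
  have hiB := (hB n).integrable_norm_pow two_ne_zero
  rw [← integral_add hiA hiB, ← integral_const_mul]
  refine integral_mono_of_nonneg (.of_forall fun x => sq_nonneg _) ((hiA.add hiB).const_mul 2)
    (.of_forall fun x => ?_)
  calc ‖A n x - B n x‖ ^ 2 ≤ (‖A n x‖ + ‖B n x‖) ^ 2 := by gcongr; exact norm_sub_le _ _
    _ ≤ 2 * (‖A n x‖ ^ 2 + ‖B n x‖ ^ 2) := add_sq_le

theorem integrable_mul_inner {τ : α → ℝ} {a b : α → F} (hτ : MemLp τ ⊤ μ)
    (ha : MemLp a 2 μ) (hb : MemLp b 2 μ) : Integrable (fun x => τ x * ⟪a x, b x⟫) μ :=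
  (memLp_one_iff_integrable.1 ((innerSL ℝ (E := F)).memLp_of_bilin 1 ha hb)).mul_of_top_right hτ

theorem integral_mul_inner_sub_left {τ : α → ℝ} {a b w : α → F} (hτ : MemLp τ ⊤ μ)
    (ha : MemLp a 2 μ) (hb : MemLp b 2 μ) (hw : MemLp w 2 μ) :
    ∫ x, τ x * ⟪a x - b x, w x⟫ ∂μ = ∫ x, τ x * ⟪a x, w x⟫ ∂μ - ∫ x, τ x * ⟪b x, w x⟫ ∂μ := by
  rw [← integral_sub (integrable_mul_inner hτ ha hw) (integrable_mul_inner hτ hb hw)]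
  simp only [inner_sub_left, mul_sub]

theorem integral_add_mul_inner {σ κ : α → ℝ} {a w : α → F} (hσ : MemLp σ ⊤ μ)
    (hκ : MemLp κ ⊤ μ) (ha : MemLp a 2 μ) (hw : MemLp w 2 μ) :
    ∫ x, (σ x + κ x) * ⟪a x, w x⟫ ∂μ = ∫ x, σ x * ⟪a x, w x⟫ ∂μ + ∫ x, κ x * ⟪a x, w x⟫ ∂μ := by
  rw [← integral_add (integrable_mul_inner hσ ha hw) (integrable_mul_inner hκ ha hw)]
  simp only [add_mul]

theorem integral_mul_inner_sub_eq_of_integral_eq {σ κ : α → ℝ} {a b w : α → F} {r : ℝ}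
    (hσ : MemLp σ ⊤ μ) (hκ : MemLp κ ⊤ μ) (ha : MemLp a 2 μ) (hb : MemLp b 2 μ)
    (hw : MemLp w 2 μ) (ha_eq : ∫ x, (σ x + κ x) * ⟪a x, w x⟫ ∂μ = r)
    (hb_eq : ∫ x, σ x * ⟪b x, w x⟫ ∂μ = r) :
    ∫ x, σ x * ⟪a x - b x, w x⟫ ∂μ = -∫ x, κ x * ⟪a x, w x⟫ ∂μ := by
  rw [integral_add_mul_inner hσ hκ ha hw] at ha_eq
  rw [integral_mul_inner_sub_left hσ ha hb hw]
  linarith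

theorem integral_mul_inner_sub_sub_eq_of_integral_eq {σ κ : α → ℝ} {a b g w : α → F} {r : ℝ}
    (hσ : MemLp σ ⊤ μ) (hκ : MemLp κ ⊤ μ) (ha : MemLp a 2 μ) (hb : MemLp b 2 μ)
    (hg : MemLp g 2 μ) (hw : MemLp w 2 μ) (ha_eq : ∫ x, (σ x + κ x) * ⟪a x, w x⟫ ∂μ = r)
    (hb_eq : ∫ x, σ x * ⟪b x, w x⟫ ∂μ = r)
    (hg_eq : ∫ x, σ x * ⟪g x, w x⟫ ∂μ = -∫ x, κ x * ⟪b x, w x⟫ ∂μ) :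
    ∫ x, σ x * ⟪a x - b x - g x, w x⟫ ∂μ = -∫ x, κ x * ⟪a x - b x, w x⟫ ∂μ := by
  rw [integral_mul_inner_sub_left (a := fun x => a x - b x) hσ (ha.sub hb) hg hw,
    integral_mul_inner_sub_eq_of_integral_eq hσ hκ ha hb hw ha_eq hb_eq, hg_eq,
    integral_mul_inner_sub_left hκ ha hb hw]
  ring

theorem mul_integral_norm_sq_le_integral_mul_inner_self {c : ℝ} {τ : α → ℝ} {a : α → F}
    (hτ : MemLp τ ⊤ μ) (hτc : ∀ᵐ x ∂μ, c ≤ τ x) (ha : MemLp a 2 μ) :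
    c * ∫ x, ‖a x‖ ^ 2 ∂μ ≤ ∫ x, τ x * ⟪a x, a x⟫ ∂μ := by
  rw [← integral_const_mul]
  refine integral_mono_ae ((ha.integrable_norm_pow two_ne_zero).const_mul c)
    (integrable_mul_inner hτ ha ha) ?_
  filter_upwards [hτc] with x hx
  rw [real_inner_self_eq_norm_sq]
  exact mul_le_mul_of_nonneg_right hx (sq_nonneg _)

theorem mul_sqrt_integral_norm_sq_le_of_integral_eq {c k : ℝ} {τ f : α → ℝ} {a b : α → F}
    (hk : 0 ≤ k) (hτ : MemLp τ ⊤ μ) (hτc : ∀ᵐ x ∂μ, c ≤ τ x) (hf : MemLp f ⊤ μ)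
    (hfk : ∀ᵐ x ∂μ, |f x| ≤ k) (ha : MemLp a 2 μ) (hb : MemLp b 2 μ)
    (heq : ∫ x, τ x * ⟪a x, a x⟫ ∂μ = -∫ x, f x * ⟪b x, a x⟫ ∂μ) :
    c * √(∫ x, ‖a x‖ ^ 2 ∂μ) ≤ k * √(∫ x, ‖b x‖ ^ 2 ∂μ) := by
  refine mul_le_of_mul_sq_le_mul (Real.sqrt_nonneg _) (by positivity) ?_
  rw [Real.sq_sqrt (integral_nonneg fun x => sq_nonneg _)]
  calc c * ∫ x, ‖a x‖ ^ 2 ∂μ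
      ≤ ∫ x, τ x * ⟪a x, a x⟫ ∂μ := mul_integral_norm_sq_le_integral_mul_inner_self hτ hτc ha
    _ = -∫ x, f x * ⟪b x, a x⟫ ∂μ := heq
    _ ≤ ∫ x, |f x * ⟪b x, a x⟫| ∂μ := (neg_le_abs _).trans abs_integral_le_integral_abs
    _ ≤ ∫ x, k * (‖b x‖ * ‖a x‖) ∂μ := by
        refine integral_mono_ae (integrable_mul_inner hf hb ha).abs
          ((hb.norm.integrable_mul ha.norm).const_mul k) ?_
        filter_upwards [hfk] with x hx
        rw [abs_mul]
        exact mul_le_mul hx (abs_real_inner_le_norm _ _) (abs_nonneg _) hk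
    _ = k * ∫ x, ‖b x‖ * ‖a x‖ ∂μ := integral_const_mul _ _
    _ ≤ k * (√(∫ x, ‖b x‖ ^ 2 ∂μ) * √(∫ x, ‖a x‖ ^ 2 ∂μ)) := by
        gcongr
        exact integral_norm_mul_norm_le hb ha
    _ = k * √(∫ x, ‖b x‖ ^ 2 ∂μ) * √(∫ x, ‖a x‖ ^ 2 ∂μ) := (mul_assoc _ _ _).symm

theorem mul_sqrt_integral_norm_sq_le_of_energy_eq [IsFiniteMeasure μ] {c C : ℝ} {τ u : α → ℝ}
    {g : α → F} (hC : 0 ≤ C) (hτ : MemLp τ ⊤ μ) (hτc : ∀ᵐ x ∂μ, c ≤ τ x) (hu : MemLp u 2 μ)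
    (hg : MemLp g 2 μ) (heq : ∫ x, τ x * ⟪g x, g x⟫ ∂μ = -∫ x, u x ∂μ)
    (hPF : √(∫ x, u x ^ 2 ∂μ) ≤ C * √(∫ x, ‖g x‖ ^ 2 ∂μ)) :
    c * √(∫ x, ‖g x‖ ^ 2 ∂μ) ≤ √(μ.real Set.univ) * C := by
  refine mul_le_of_mul_sq_le_mul (Real.sqrt_nonneg _) (by positivity) ?_
  rw [Real.sq_sqrt (integral_nonneg fun x => sq_nonneg _)]
  calc c * ∫ x, ‖g x‖ ^ 2 ∂μ
      ≤ ∫ x, τ x * ⟪g x, g x⟫ ∂μ := mul_integral_norm_sq_le_integral_mul_inner_self hτ hτc hg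
    _ = -∫ x, u x ∂μ := heq
    _ ≤ √(μ.real Set.univ) * √(∫ x, u x ^ 2 ∂μ) := neg_integral_le_sqrt_measure_mul hu
    _ ≤ √(μ.real Set.univ) * (C * √(∫ x, ‖g x‖ ^ 2 ∂μ)) := by gcongr
    _ = √(μ.real Set.univ) * C * √(∫ x, ‖g x‖ ^ 2 ∂μ) := (mul_assoc _ _ _).symm

end MeasureTheory

section Gradient

variable {F : Type*} [NormedAddCommGroup F] [InnerProductSpace ℝ F] [CompleteSpace F]

theorem gradient_fun_sub {f g : F → ℝ} {x : F} (hf : DifferentiableAt ℝ f x)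
    (hg : DifferentiableAt ℝ g x) :
    gradient (fun y => f y - g y) x = gradient f x - gradient g x := by
  simp only [gradient, fderiv_fun_sub hf hg, map_sub]

theorem ContDiff.continuous_gradient {f : F → ℝ} {n : WithTop ℕ∞} (hf : ContDiff ℝ n f)
    (hn : n ≠ 0) : Continuous (gradient f) :=
  (InnerProductSpace.toDual ℝ F).symm.continuous.comp (hf.continuous_fderiv hn)

theorem HasCompactSupport.gradient {f : F → ℝ} (hf : HasCompactSupport f) :
    HasCompactSupport (gradient f) :=
  (hf.fderiv ℝ).comp_left (map_zero _)

end Gradient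

theorem MemH10.sub {Ω : Set E2} {u u' : E2 → ℝ} {gu gu' : E2 → E2} (h : MemH10 Ω u gu)
    (h' : MemH10 Ω u' gu') : MemH10 Ω (fun x => u x - u' x) (fun x => gu x - gu' x) := by
  obtain ⟨hu, hgu, φ, hφ, hφu, hφg⟩ := h
  obtain ⟨hu', hgu', ψ, hψ, hψu, hψg⟩ := h'
  refine ⟨hu.sub hu', hgu.sub hgu', fun n x => φ n x - ψ n x, fun n => ⟨(hφ n).1.sub (hψ n).1,
    (hφ n).2.1.sub (hψ n).2.1, (tsupport_sub _ _).trans (Set.union_subset (hφ n).2.2 (hψ n).2.2)⟩,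
    ?_, ?_⟩
  · have := tendsto_integral_norm_sub_sq (A := fun n x => φ n x - u x)
      (B := fun n x => ψ n x - u' x)
      (fun n => ((hφ n).1.continuous.memLp_of_hasCompactSupport (hφ n).2.1).sub hu)
      (fun n => ((hψ n).1.continuous.memLp_of_hasCompactSupport (hψ n).2.1).sub hu')
      (by simpa using hφu) (by simpa using hψu)
    refine this.congr fun n => integral_congr_ae (.of_forall fun x => ?_)
    simp only [Real.norm_eq_abs, sq_abs]
    ring
  · have := tendsto_integral_norm_sub_sq (A := fun n x => gradient (φ n) x - gu x)
      (B := fun n x => gradient (ψ n) x - gu' x)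
      (fun n => (((hφ n).1.continuous_gradient (by simp)).memLp_of_hasCompactSupport
        (hφ n).2.1.gradient).sub hgu)
      (fun n => (((hψ n).1.continuous_gradient (by simp)).memLp_of_hasCompactSupport
        (hψ n).2.1.gradient).sub hgu')
      hφg hψg
    refine this.congr fun n => integral_congr_ae (.of_forall fun x => ?_)
    dsimp only
    rw [gradient_fun_sub ((hφ n).1.differentiable (by simp) x)
      ((hψ n).1.differentiable (by simp) x), sub_sub_sub_comm]

theorem statement5_general (Ω : Set E2) (hΩbdd : Bornology.IsBounded Ω)
    (C_PF : ℝ) (hC : 0 < C_PF)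
    (hPF : ∀ v gv, MemH10 Ω v gv →
      Real.sqrt (∫ x in Ω, (v x) ^ 2) ≤ C_PF * Real.sqrt (∫ x in Ω, ‖gv x‖ ^ 2))
    (σ κ : E2 → ℝ)
    (hσ : MemLp σ ⊤ (volume.restrict Ω)) (hκ : MemLp κ ⊤ (volume.restrict Ω))
    (hσ0 : 0 < essInf σ (volume.restrict Ω))
    (hσκ0 : essInf σ (volume.restrict Ω) ≤ essInf (fun x => σ x + κ x) (volume.restrict Ω))
    (uσ uσκ v : E2 → ℝ) (guσ guσκ gv : E2 → E2)
    (huσ : MemH10 Ω uσ guσ) (huσκ : MemH10 Ω uσκ guσκ) (hv : MemH10 Ω v gv)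
    (hsolσ : ∀ w gw, MemH10 Ω w gw →
      (∫ x in Ω, σ x * ⟪guσ x, gw x⟫) = -∫ x in Ω, w x)
    (hsolσκ : ∀ w gw, MemH10 Ω w gw →
      (∫ x in Ω, (σ x + κ x) * ⟪guσκ x, gw x⟫) = -∫ x in Ω, w x)
    (hsolv : ∀ w gw, MemH10 Ω w gw →
      (∫ x in Ω, σ x * ⟪gv x, gw x⟫) = -∫ x in Ω, κ x * ⟪guσ x, gw x⟫) :
    Real.sqrt (∫ x in Ω, ‖guσκ x - guσ x - gv x‖ ^ 2)
      ≤ (Real.sqrt ((volume Ω).toReal) * C_PF / (essInf σ (volume.restrict Ω)) ^ 2)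
          / essInf σ (volume.restrict Ω) *
          (essSup (fun x => |κ x|) (volume.restrict Ω)) ^ 2 := by
  have : IsFiniteMeasure (volume.restrict Ω) :=
    isFiniteMeasure_restrict.2 hΩbdd.measure_lt_top.ne
  have hd := huσκ.sub huσ
  have he := hd.sub hv
  have hk := hκ.essSup_abs_nonneg
  have hσc := hσ.ae_essInf_le
  have hσκc : ∀ᵐ x ∂volume.restrict Ω, essInf σ (volume.restrict Ω) ≤ σ x + κ x :=
    (hσ.add hκ).ae_essInf_le.mono fun _ hx => hσκ0.trans hx
  have hA : essInf σ (volume.restrict Ω) * √(∫ x in Ω, ‖guσκ x‖ ^ 2)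
      ≤ √((volume Ω).toReal) * C_PF := by
    simpa [Measure.real] using mul_sqrt_integral_norm_sq_le_of_energy_eq hC.le (hσ.add hκ) hσκc
      huσκ.1 huσκ.2.1 (hsolσκ _ _ huσκ) (hPF _ _ huσκ)
  have hD := mul_sqrt_integral_norm_sq_le_of_integral_eq hk hσ hσc hκ hκ.ae_abs_le_essSup hd.2.1
    huσκ.2.1 (integral_mul_inner_sub_eq_of_integral_eq hσ hκ huσκ.2.1 huσ.2.1 hd.2.1
      (hsolσκ _ _ hd) (hsolσ _ _ hd))
  have hE := mul_sqrt_integral_norm_sq_le_of_integral_eq hk hσ hσc hκ hκ.ae_abs_le_essSup he.2.1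
    hd.2.1 (integral_mul_inner_sub_sub_eq_of_integral_eq hσ hκ huσκ.2.1 huσ.2.1 hv.2.1 he.2.1
      (hsolσκ _ _ he) (hsolσ _ _ he) (hsolv _ _ he))
  exact le_div_sq_div_mul_sq_of_mul_le hσ0 hk hA hD hE

/-- With `c̲ := ess inf σ > 0`, `ess inf (σ+κ) ≥ c̲`, weak solutions
`u^σ, u^{σ+κ} ∈ H¹₀(Ω)` of `∇·(σ∇u) = 1` resp. `∇·((σ+κ)∇u) = 1`, and `v_κ^σ ∈ H¹₀(Ω)` the
solution of the linearized problem `∫_Ω σ ∇v·∇w = -∫_Ω κ ∇u^σ·∇w` for all `w ∈ H¹₀(Ω)`,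
it holds `‖∇(u^{σ+κ} − u^σ − v_κ^σ)‖_{L²} ≤ (C'/c̲) ‖κ‖²_{L^∞}`, where
`C' := ‖1‖_{L²(Ω)} · C_PF / c̲²` and `C_PF` is a Poincaré–Friedrichs constant of `Ω`. -/
theorem statement5 (Ω : Set E2) (hΩopen : IsOpen Ω) (hΩconn : IsConnected Ω)
    (hΩbdd : Bornology.IsBounded Ω)
    (C_PF : ℝ) (hC : 0 < C_PF)
    (hPF : ∀ v gv, MemH10 Ω v gv →
      Real.sqrt (∫ x in Ω, (v x) ^ 2) ≤ C_PF * Real.sqrt (∫ x in Ω, ‖gv x‖ ^ 2))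
    (σ κ : E2 → ℝ)
    (hσ : MemLp σ ⊤ (volume.restrict Ω)) (hκ : MemLp κ ⊤ (volume.restrict Ω))
    (hσ0 : 0 < essInf σ (volume.restrict Ω))
    (hσκ0 : essInf σ (volume.restrict Ω) ≤ essInf (fun x => σ x + κ x) (volume.restrict Ω))
    (uσ uσκ v : E2 → ℝ) (guσ guσκ gv : E2 → E2)
    (huσ : MemH10 Ω uσ guσ) (huσκ : MemH10 Ω uσκ guσκ) (hv : MemH10 Ω v gv)
    (hsolσ : ∀ w gw, MemH10 Ω w gw →
      (∫ x in Ω, σ x * ⟪guσ x, gw x⟫) = -∫ x in Ω, w x)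
    (hsolσκ : ∀ w gw, MemH10 Ω w gw →
      (∫ x in Ω, (σ x + κ x) * ⟪guσκ x, gw x⟫) = -∫ x in Ω, w x)
    (hsolv : ∀ w gw, MemH10 Ω w gw →
      (∫ x in Ω, σ x * ⟪gv x, gw x⟫) = -∫ x in Ω, κ x * ⟪guσ x, gw x⟫) :
    Real.sqrt (∫ x in Ω, ‖guσκ x - guσ x - gv x‖ ^ 2)
      ≤ (Real.sqrt ((volume Ω).toReal) * C_PF / (essInf σ (volume.restrict Ω)) ^ 2)
          / essInf σ (volume.restrict Ω) *
          (essSup (fun x => |κ x|) (volume.restrict Ω)) ^ 2 :=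
  statement5_general Ω hΩbdd C_PF hC hPF σ κ hσ hκ hσ0 hσκ0 uσ uσκ v guσ guσκ gv huσ huσκ hv hsolσ
    hsolσκ hsolv
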